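/- arXiv:1803.02235 — 4 statements merged into one kernel-verified Lean document; each statement's English description precedes it below -/
import Mathlib

section
/- Let 0 < λ ≤ 1 and suppose W ⊆ V is a nonempty subset equipped with nonnegative weights (a_w)_{w∈W} such that W integrates φ_i exactly for every index i with |μ_i| ≥ λ. Then for every natural number k, the number of vertices within graph distance k of W satisfies #{x ∈ V : d(x,W) ≤ k} ≥ (1/2) · min(λ^{-2k}, n). -/
/-! Let `b` be the weight vector of the design and `g = Mᵏ b`. Exact integration forces the
coefficients of `b` on the eigenvectors `φ_i ≠ φ_0` with `|μ_i| ≥ λ` to vanish, so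
`‖g‖² ≤ 1/n + λ^{2k} ‖b‖² ≤ 1/n + λ^{2k}`. Since `g` has total mass `1` and is supported in
the `k`-neighbourhood `B` of `W`, Cauchy–Schwarz gives `1 ≤ |B| ‖g‖²`, whence
`|B| ≥ (1/n + λ^{2k})⁻¹ ≥ ½ min(λ^{-2k}, n)`. -/

open Finset Matrix

theorem pow_apply_eq_pow_smul_of_apply_eq_smul {R M : Type*} [CommSemiring R] [AddCommMonoid M]
    [Module R M] {f : Module.End R M} {μ : R} {x : M} (h : f x = μ • x) (k : ℕ) :
    (f ^ k) x = μ ^ k • x := by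
  induction k with
  | zero => simp
  | succ k ih => rw [pow_succ', Module.End.mul_apply, ih, map_smul, h, smul_smul, pow_succ]

section Orthonormal

variable {V ι : Type*} [Fintype V] [Fintype ι] [DecidableEq ι]
  {φ : ι → V → ℝ} {μ : ι → ℝ}

theorem sum_smul_dotProduct_of_orthonormal
    (horth : ∀ i j, φ i ⬝ᵥ φ j = if i = j then 1 else 0) (d : ι → ℝ) (j : ι) :
    (∑ i, d i • φ i) ⬝ᵥ φ j = d j := by
  simp [sum_dotProduct, smul_dotProduct, horth]

theorem sum_smul_dotProduct_self_of_orthonormal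
    (horth : ∀ i j, φ i ⬝ᵥ φ j = if i = j then 1 else 0) (d : ι → ℝ) :
    (∑ i, d i • φ i) ⬝ᵥ (∑ i, d i • φ i) = ∑ i, d i ^ 2 := by
  rw [dotProduct_sum]
  simp only [dotProduct_smul, sum_smul_dotProduct_of_orthonormal horth, smul_eq_mul, sq]

theorem eq_sum_dotProduct_smul_of_orthonormal
    (horth : ∀ i j, φ i ⬝ᵥ φ j = if i = j then 1 else 0)
    (hcard : Fintype.card ι = Fintype.card V) (f : V → ℝ) :
    f = ∑ i, (f ⬝ᵥ φ i) • φ i := by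
  classical
  let P : Matrix ι V ℝ := Matrix.of φ
  have hPPt : P * Pᵀ = 1 := by
    ext i j
    simpa [P, Matrix.mul_apply, Matrix.one_apply, dotProduct] using horth i j
  have hPtP : Pᵀ * P = 1 := (mul_eq_one_comm_of_equiv (Fintype.equivOfCardEq hcard)).mp hPPt
  ext v
  have := congrArg (· *ᵥ f) hPtP
  simp only [one_mulVec, ← mulVec_mulVec] at this
  conv_lhs => rw [← this]
  simp [P, mulVec, dotProduct, Finset.sum_apply, mul_comm]

theorem sum_sq_mul_pow_le {c : ι → ℝ} {i₀ : ι} {lam : ℝ} (hμ₀ : μ i₀ = 1)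
    (hc : ∀ i ≠ i₀, lam ≤ |μ i| → c i = 0) (k : ℕ) :
    ∑ i, (c i * μ i ^ k) ^ 2 ≤ c i₀ ^ 2 + lam ^ (2 * k) * ∑ i, c i ^ 2 := by
  have hterm : ∀ i ≠ i₀, (c i * μ i ^ k) ^ 2 ≤ lam ^ (2 * k) * c i ^ 2 := by
    intro i hi
    by_cases hμ : lam ≤ |μ i|
    · simp [hc i hi hμ]
    have hpow : (μ i ^ k) ^ 2 ≤ lam ^ (2 * k) :=
      calc (μ i ^ k) ^ 2 = |μ i| ^ (2 * k) := by
            rw [pow_mul, sq_abs, ← pow_mul, ← pow_mul, mul_comm]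
        _ ≤ lam ^ (2 * k) := pow_le_pow_left₀ (abs_nonneg _) (not_le.mp hμ).le _
    rw [mul_pow, mul_comm]
    exact mul_le_mul_of_nonneg_right hpow (sq_nonneg _)
  calc ∑ i, (c i * μ i ^ k) ^ 2
      = (c i₀ * μ i₀ ^ k) ^ 2 + ∑ i ∈ univ.erase i₀, (c i * μ i ^ k) ^ 2 :=
        (add_sum_erase _ _ (mem_univ _)).symm
    _ ≤ c i₀ ^ 2 + ∑ i ∈ univ.erase i₀, lam ^ (2 * k) * c i ^ 2 := by
        rw [hμ₀, one_pow, mul_one]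
        gcongr with i hi
        exact hterm i (ne_of_mem_erase hi)
    _ ≤ c i₀ ^ 2 + lam ^ (2 * k) * ∑ i, c i ^ 2 := by
        rw [← mul_sum]
        have := (even_two_mul k).pow_nonneg lam
        gcongr
        exact erase_subset _ _

variable {M : Matrix V V ℝ}

theorem mulVecLin_pow_eq_sum_of_orthonormal
    (horth : ∀ i j, φ i ⬝ᵥ φ j = if i = j then 1 else 0)
    (hcard : Fintype.card ι = Fintype.card V) (heig : ∀ i, M *ᵥ φ i = μ i • φ i)
    (f : V → ℝ) (k : ℕ) :
    (M.mulVecLin ^ k) f = ∑ i, ((f ⬝ᵥ φ i) * μ i ^ k) • φ i := by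
  have hpow (i) : (M.mulVecLin ^ k) (φ i) = μ i ^ k • φ i :=
    pow_apply_eq_pow_smul_of_apply_eq_smul (f := M.mulVecLin) (heig i) k
  conv_lhs => rw [eq_sum_dotProduct_smul_of_orthonormal horth hcard f]
  simp only [map_sum, map_smul, hpow, smul_smul]

theorem mulVecLin_pow_dotProduct_of_orthonormal
    (horth : ∀ i j, φ i ⬝ᵥ φ j = if i = j then 1 else 0)
    (hcard : Fintype.card ι = Fintype.card V) (heig : ∀ i, M *ᵥ φ i = μ i • φ i)
    (f : V → ℝ) (k : ℕ) (j : ι) :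
    (M.mulVecLin ^ k) f ⬝ᵥ φ j = (f ⬝ᵥ φ j) * μ j ^ k := by
  rw [mulVecLin_pow_eq_sum_of_orthonormal horth hcard heig,
    sum_smul_dotProduct_of_orthonormal horth]

theorem mulVecLin_pow_dotProduct_self_le
    (horth : ∀ i j, φ i ⬝ᵥ φ j = if i = j then 1 else 0)
    (hcard : Fintype.card ι = Fintype.card V) (heig : ∀ i, M *ᵥ φ i = μ i • φ i)
    {i₀ : ι} (hμ₀ : μ i₀ = 1) {lam : ℝ} {f : V → ℝ}
    (hf : ∀ i ≠ i₀, lam ≤ |μ i| → f ⬝ᵥ φ i = 0) (k : ℕ) :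
    (M.mulVecLin ^ k) f ⬝ᵥ (M.mulVecLin ^ k) f ≤
      (f ⬝ᵥ φ i₀) ^ 2 + lam ^ (2 * k) * (f ⬝ᵥ f) := by
  rw [mulVecLin_pow_eq_sum_of_orthonormal horth hcard heig,
    sum_smul_dotProduct_self_of_orthonormal horth]
  conv_rhs => rw [eq_sum_dotProduct_smul_of_orthonormal horth hcard f,
    sum_smul_dotProduct_self_of_orthonormal horth, sum_smul_dotProduct_of_orthonormal horth]
  exact sum_sq_mul_pow_le hμ₀ hf k

end Orthonormal

theorem inv_mul_sum_of_orthonormal {V ι : Type*} [Fintype V] [DecidableEq ι]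
    {φ : ι → V → ℝ}
    (horth : ∀ i j, φ i ⬝ᵥ φ j = if i = j then 1 else 0) {r : ℝ} (hr : 0 < r) {i₀ : ι}
    (hφ₀ : ∀ v, φ i₀ v = (√r)⁻¹) (i : ι) :
    1 / r * ∑ v, φ i v = if i = i₀ then (√r)⁻¹ else 0 := by
  have : ∑ v, φ i v = √r * (φ i ⬝ᵥ φ i₀) := by
    simp only [dotProduct, hφ₀, ← sum_mul]
    field_simp
  rw [this, horth]
  split_ifs
  · field_simp
    rw [Real.sq_sqrt hr.le]
  · simp

section Support

variable {V R : Type*} [Fintype V] [CommSemiring R] {G : SimpleGraph V} {M : Matrix V V R}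

theorem exists_walk_of_mulVecLin_pow_apply_ne_zero (hM : ∀ u v, ¬ G.Adj u v → M u v = 0)
    {f : V → R} {k : ℕ} {x : V} (h : (M.mulVecLin ^ k) f x ≠ 0) :
    ∃ y, f y ≠ 0 ∧ ∃ p : G.Walk x y, p.length = k := by
  induction k generalizing x with
  | zero => exact ⟨x, h, .nil, rfl⟩
  | succ k ih =>
    rw [pow_succ', Module.End.mul_apply, mulVecLin_apply, mulVec, dotProduct] at h
    obtain ⟨z, -, hz⟩ := exists_ne_zero_of_sum_ne_zero h
    have hxz : G.Adj x z := by_contra fun hxz => hz (by rw [hM x z hxz, zero_mul])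
    obtain ⟨y, hy, p, rfl⟩ := ih (right_ne_zero_of_mul hz)
    exact ⟨y, hy, .cons hxz p, rfl⟩

theorem exists_mem_dist_le_of_mulVecLin_pow_apply_ne_zero
    (hM : ∀ u v, ¬ G.Adj u v → M u v = 0) {W : Finset V} {f : V → R}
    (hf : ∀ y ∉ W, f y = 0) {k : ℕ} {x : V} (h : (M.mulVecLin ^ k) f x ≠ 0) :
    ∃ w ∈ W, G.dist x w ≤ k := by
  obtain ⟨y, hy, p, rfl⟩ := exists_walk_of_mulVecLin_pow_apply_ne_zero hM h
  exact ⟨y, by_contra fun hyW => hy (hf y hyW), G.dist_le p⟩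

end Support

theorem indicator_dotProduct {V R : Type*} [Fintype V] [NonUnitalNonAssocSemiring R]
    (W : Finset V) (a f : V → R) :
    (W : Set V).indicator a ⬝ᵥ f = ∑ w ∈ W, a w * f w := by
  classical
  simp [dotProduct, Set.indicator_apply, ite_mul, Finset.sum_ite_mem]

theorem indicator_dotProduct_self_le_one {V : Type*} [Fintype V] {W : Finset V} {a : V → ℝ}
    (ha : ∀ w ∈ W, 0 ≤ a w) (h1 : ∑ w ∈ W, a w = 1) :
    (W : Set V).indicator a ⬝ᵥ (W : Set V).indicator a ≤ 1 :=
  calc (W : Set V).indicator a ⬝ᵥ (W : Set V).indicator a = ∑ w ∈ W, a w ^ 2 := by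
        rw [indicator_dotProduct]
        exact sum_congr rfl fun w hw => by rw [Set.indicator_of_mem (mem_coe.mpr hw), sq]
    _ ≤ (∑ w ∈ W, a w) ^ 2 := sum_sq_le_sq_sum_of_nonneg ha
    _ = 1 := by rw [h1, one_pow]

theorem sum_eq_one_of_dotProduct_const {V : Type*} [Fintype V] {f : V → ℝ} {c : ℝ}
    (hc : c ≠ 0) (h : f ⬝ᵥ (fun _ => c) = c) : ∑ x, f x = 1 := by
  rwa [dotProduct, ← sum_mul, mul_eq_right₀ hc] at h

theorem one_le_card_mul_dotProduct_self {V : Type*} [Fintype V] {g : V → ℝ} {B : Finset V}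
    (hg : ∀ x ∉ B, g x = 0) (h1 : ∑ x, g x = 1) : 1 ≤ #B * (g ⬝ᵥ g) :=
  calc (1 : ℝ) = (∑ x ∈ B, g x) ^ 2 := by
        rw [sum_subset (subset_univ B) fun x _ hx => hg x hx, h1, one_pow]
    _ ≤ #B * ∑ x ∈ B, g x ^ 2 := sq_sum_le_card_mul_sum_sq
    _ ≤ #B * (g ⬝ᵥ g) := by
        simp only [dotProduct, ← sq]
        gcongr
        exact subset_univ B

theorem half_min_inv_le_of_one_le_mul {L n N : ℝ} (hL : 0 ≤ L) (hn : 0 < n)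
    (h : 1 ≤ N * (n⁻¹ + L)) : 1 / 2 * min L⁻¹ n ≤ N := by
  have hn' : 0 < n⁻¹ := inv_pos.mpr hn
  rcases le_total L⁻¹ n with hle | hle
  · rw [min_eq_left hle]
    rcases hL.eq_or_lt with rfl | hL
    · nlinarith
    have : n⁻¹ ≤ L := (inv_le_comm₀ hL hn).mp hle
    have : 1 ≤ 2 * N * L := by nlinarith
    rw [inv_eq_one_div, ← mul_div_assoc, div_le_iff₀ hL]
    linarith
  · rw [min_eq_right hle]
    have hL : 0 < L := inv_pos.mp (hn.trans_le hle)
    have : L ≤ n⁻¹ := (le_inv_comm₀ hn hL).mp hle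
    have : 1 ≤ 2 * N * n⁻¹ := by nlinarith
    rw [← mul_le_mul_iff_of_pos_right hn']
    field_simp at this ⊢
    linarith

theorem graphical_design_neighborhood_growth_general
    {V : Type*} [Fintype V]
    (G : SimpleGraph V) [DecidableRel G.Adj]
    (n : ℕ) (hn : Fintype.card V = n) (hn1 : 0 < n)
    (M : Matrix V V ℝ)
    (hM : ∀ u v : V, M u v = if G.Adj u v then ((G.degree v : ℝ))⁻¹ else 0)
    (φ : Fin n → V → ℝ) (μ : Fin n → ℝ)
    (horth : ∀ i j : Fin n, ∑ v : V, φ i v * φ j v = if i = j then 1 else 0)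
    (heig : ∀ i : Fin n, M.mulVec (φ i) = μ i • φ i)
    (hφ0 : ∀ v : V, φ ⟨0, hn1⟩ v = (Real.sqrt n)⁻¹)
    (hμ0 : μ ⟨0, hn1⟩ = 1)
    (lam : ℝ) (hlam1 : lam ≤ 1)
    (W : Finset V)
    (a : V → ℝ) (ha : ∀ w ∈ W, 0 ≤ a w)
    (hint : ∀ i : Fin n, lam ≤ |μ i| →
      ∑ w ∈ W, a w * φ i w = (1 / (n : ℝ)) * ∑ v : V, φ i v) :
    ∀ k : ℕ,
      (({x : V | ∃ w ∈ W, G.dist x w ≤ k}.ncard : ℝ)) ≥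
        (1 / 2) * min ((lam ^ (2 * k))⁻¹) (n : ℝ) := by
  classical
  intro k
  set i₀ : Fin n := ⟨0, hn1⟩
  set b : V → ℝ := (W : Set V).indicator a
  set g : V → ℝ := (M.mulVecLin ^ k) b
  have hcard : Fintype.card (Fin n) = Fintype.card V := by simp [hn]
  have hsqrt : (√n : ℝ)⁻¹ ≠ 0 := by positivity
  have hL : 0 ≤ lam ^ (2 * k) := (even_two_mul k).pow_nonneg lam
  -- `hint i` equates the `φ i`-coefficients of `b` and of the uniform distribution.
  have hb (i) (hi : lam ≤ |μ i|) : b ⬝ᵥ φ i = if i = i₀ then (√n)⁻¹ else 0 := by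
    rw [← inv_mul_sum_of_orthonormal horth (by positivity) hφ0, ← hint i hi]
    exact indicator_dotProduct W a (φ i)
  have hb₀ : b ⬝ᵥ φ i₀ = (√n)⁻¹ := by simpa using hb i₀ (by rwa [hμ0, abs_one])
  have hmass : ∑ w ∈ W, a w = 1 := by
    rw [← sum_indicator_subset a (subset_univ W)]
    exact sum_eq_one_of_dotProduct_const hsqrt (funext hφ0 ▸ hb₀)
  have hgsum : ∑ x, g x = 1 := by
    refine sum_eq_one_of_dotProduct_const hsqrt ?_
    rw [← funext hφ0, mulVecLin_pow_dotProduct_of_orthonormal horth hcard heig, hb₀, hμ0,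
      one_pow, mul_one]
  have hgg : g ⬝ᵥ g ≤ (n : ℝ)⁻¹ + lam ^ (2 * k) := by
    refine (mulVecLin_pow_dotProduct_self_le horth hcard heig hμ0 (lam := lam)
      (fun i hi hμ => by simp [hb i hμ, hi]) k).trans ?_
    rw [hb₀, inv_pow, Real.sq_sqrt (Nat.cast_nonneg n)]
    gcongr
    exact mul_le_of_le_one_right hL (indicator_dotProduct_self_le_one ha hmass)
  have hsupp : ∀ x ∉ {x : V | ∃ w ∈ W, G.dist x w ≤ k}.toFinset, g x = 0 :=
    fun x hx => by_contra fun hgx => hx <| Set.mem_toFinset.mpr <|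
      exists_mem_dist_le_of_mulVecLin_pow_apply_ne_zero (fun u v huv => by simp [hM, huv])
        (fun y hy => Set.indicator_of_notMem hy a) hgx
  rw [Set.ncard_eq_toFinset_card', ge_iff_le]
  refine half_min_inv_le_of_one_le_mul hL (by positivity) ?_
  exact (one_le_card_mul_dotProduct_self hsupp hgsum).trans
    (mul_le_mul_of_nonneg_left hgg (Nat.cast_nonneg _))

/-- Let `G` be a finite simple connected graph on `n ≥ 1` vertices in which
every vertex has positive degree, `M = A D⁻¹` its random-walk matrix, with an orthonormal
eigenbasis `φ_0, …, φ_{n-1}`, `M φ_i = μ_i • φ_i`, where `φ_0` is the constant vector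
`n^{-1/2}·(1,…,1)` with eigenvalue `μ_0 = 1`.  If `0 < λ ≤ 1` and the nonempty set `W` with
nonnegative weights `a_w` integrates `φ_i` exactly whenever `|μ_i| ≥ λ`, then for every `k`,
`#{x : d(x,W) ≤ k} ≥ (1/2) · min(λ^{-2k}, n)`. -/
theorem graphical_design_neighborhood_growth
    {V : Type*} [Fintype V] [DecidableEq V]
    (G : SimpleGraph V) [DecidableRel G.Adj]
    (hconn : G.Connected)
    (n : ℕ) (hn : Fintype.card V = n) (hn1 : 0 < n)
    (hdeg : ∀ v : V, 0 < G.degree v)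
    (M : Matrix V V ℝ)
    (hM : ∀ u v : V, M u v = if G.Adj u v then ((G.degree v : ℝ))⁻¹ else 0)
    (φ : Fin n → V → ℝ) (μ : Fin n → ℝ)
    (horth : ∀ i j : Fin n, ∑ v : V, φ i v * φ j v = if i = j then 1 else 0)
    (heig : ∀ i : Fin n, M.mulVec (φ i) = μ i • φ i)
    (hφ0 : ∀ v : V, φ ⟨0, hn1⟩ v = (Real.sqrt n)⁻¹)
    (hμ0 : μ ⟨0, hn1⟩ = 1)
    (lam : ℝ) (hlam : 0 < lam) (hlam1 : lam ≤ 1)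
    (W : Finset V) (hW : W.Nonempty)
    (a : V → ℝ) (ha : ∀ w ∈ W, 0 ≤ a w)
    (hint : ∀ i : Fin n, lam ≤ |μ i| →
      ∑ w ∈ W, a w * φ i w = (1 / (n : ℝ)) * ∑ v : V, φ i v) :
    ∀ k : ℕ,
      (({x : V | ∃ w ∈ W, G.dist x w ≤ k}.ncard : ℝ)) ≥
        (1 / 2) * min ((lam ^ (2 * k))⁻¹) (n : ℝ) :=
  graphical_design_neighborhood_growth_general G n hn hn1 M hM φ μ horth heig hφ0 hμ0 lam hlam1 W a
    ha hint
end

section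
/- Let 0 < λ ≤ 1 and suppose W ⊆ V is a nonempty subset equipped with nonnegative weights (a_w)_{w∈W} such that W integrates φ_i exactly for every index i with |μ_i| ≥ λ. Set f = Σ_{w∈W} a_w δ_w − (1/n)·𝟙, where δ_w is the indicator vector of the vertex w and 𝟙 is the all-ones vector. Then for every natural number k, ‖M^k f‖² ≤ λ^{2k} · Σ_{w∈W} a_w². -/
/-!
Expand `f` in the orthonormal eigenbasis `φ`. Exactness of the design kills every coefficient
with `|μ i| ≥ λ`, so `M ^ k` multiplies each surviving coefficient by `μ i ^ k` with
`|μ i| < λ`, and Parseval gives `‖M ^ k f‖ ≤ λ ^ k ‖f‖` (no symmetry of `M` is needed).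
Exactness for the constant eigenvector says that the weights sum to one, i.e. `f ⟂ 𝟙`, so by
Pythagoras `‖f‖² ≤ ‖f + 𝟙 / n‖² = ‖Σ a_w δ_w‖² = Σ a_w²`.
-/

open Finset

open scoped InnerProductSpace Matrix

section EigenbasisDecay

variable {ι E : Type*} [Fintype ι]

theorem OrthonormalBasis.inner_map_eq_mul_inner {𝕜 : Type*} [RCLike 𝕜] [NormedAddCommGroup E]
    [InnerProductSpace 𝕜 E] (b : OrthonormalBasis ι 𝕜 E) {T : E →ₗ[𝕜] E}
    {μ : ι → 𝕜} (hT : ∀ i, T (b i) = μ i • b i) (x : E) (i : ι) :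
    ⟪b i, T x⟫_𝕜 = μ i * ⟪b i, x⟫_𝕜 := by
  classical
  conv_lhs => rw [← b.sum_repr' x]
  simp [map_sum, hT, inner_sum, inner_smul_right, b.inner_eq_ite, mul_comm]

theorem OrthonormalBasis.norm_sq_map_le [NormedAddCommGroup E] [InnerProductSpace ℝ E]
    (b : OrthonormalBasis ι ℝ E) {T : E →ₗ[ℝ] E} {μ : ι → ℝ} (hT : ∀ i, T (b i) = μ i • b i)
    {x : E} {c : ℝ} (hx : ∀ i, ⟪b i, x⟫_ℝ ≠ 0 → |μ i| ≤ c) :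
    ‖T x‖ ^ 2 ≤ c ^ 2 * ‖x‖ ^ 2 := by
  classical
  rw [← b.sum_sq_inner_right, ← b.sum_sq_inner_right, mul_sum]
  gcongr with i
  rw [b.inner_map_eq_mul_inner hT, mul_pow]
  by_cases hi : ⟪b i, x⟫_ℝ = 0
  · simp [hi]
  · obtain ⟨hlo, hhi⟩ := abs_le.mp (hx i hi)
    exact mul_le_mul_of_nonneg_right (sq_le_sq' hlo hhi) (sq_nonneg _)

end EigenbasisDecay

theorem EuclideanSpace.orthonormal_toLp_iff {ι V : Type*} [Fintype V] [DecidableEq ι]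
    {φ : ι → V → ℝ} :
    Orthonormal ℝ (fun i ↦ WithLp.toLp 2 (φ i) : ι → EuclideanSpace ℝ V) ↔
      ∀ i j, ∑ v, φ i v * φ j v = if i = j then 1 else 0 := by
  simp [orthonormal_iff_ite, EuclideanSpace.inner_toLp_toLp, dotProduct, mul_comm]

theorem Matrix.pow_mulVec_of_mulVec_eq_smul {V R : Type*} [Fintype V] [DecidableEq V]
    [CommRing R] {M : Matrix V V R} {x : V → R} {μ : R} (h : M *ᵥ x = μ • x) (k : ℕ) :
    (M ^ k) *ᵥ x = μ ^ k • x := by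
  induction k with
  | zero => simp
  | succ k ih => rw [pow_succ', ← mulVec_mulVec, ih, mulVec_smul, h, smul_smul, pow_succ]

theorem Matrix.sum_sq_mulVec_le_of_orthonormal_eigenvectors {ι V : Type*} [Fintype ι]
    [DecidableEq ι] [Fintype V] [DecidableEq V] {M : Matrix V V ℝ} {φ : ι → V → ℝ} {μ : ι → ℝ}
    (hcard : Fintype.card ι = Fintype.card V)
    (horth : ∀ i j, ∑ v, φ i v * φ j v = if i = j then 1 else 0)
    (heig : ∀ i, M *ᵥ φ i = μ i • φ i) {f : V → ℝ} {c : ℝ}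
    (hf : ∀ i, ∑ v, φ i v * f v ≠ 0 → |μ i| ≤ c) :
    ∑ v, (M *ᵥ f) v ^ 2 ≤ c ^ 2 * ∑ v, f v ^ 2 := by
  have hon := EuclideanSpace.orthonormal_toLp_iff.mpr horth
  let b := OrthonormalBasis.mk hon
    (hon.linearIndependent.span_eq_top_of_card_eq_finrank' (by simpa using hcard)).ge
  have hb : ∀ i, b i = WithLp.toLp 2 (φ i) := fun i ↦ congrFun (OrthonormalBasis.coe_mk _ _) i
  have key := b.norm_sq_map_le (T := M.toEuclideanLin) (μ := μ) (x := WithLp.toLp 2 f)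
    (fun i ↦ by simp [hb, heig])
    (fun i ↦ by simpa [hb, EuclideanSpace.inner_toLp_toLp, dotProduct, mul_comm] using hf i)
  simpa [EuclideanSpace.real_norm_sq_eq] using key

theorem sum_sq_le_sum_sq_add_const {V : Type*} [Fintype V] {f : V → ℝ} (hf : ∑ v, f v = 0)
    (c : ℝ) : ∑ v, f v ^ 2 ≤ ∑ v, (f v + c) ^ 2 := by
  simp only [add_sq, sum_add_distrib, ← sum_mul, ← mul_sum, hf]
  simp only [mul_zero, zero_mul, add_zero, le_add_iff_nonneg_right]
  positivity

theorem graphical_design_diffusion_upper_bound_general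
    {V : Type*} [Fintype V] [DecidableEq V]
    (n : ℕ) (hn : Fintype.card V = n) (hn1 : 0 < n)
    (M : Matrix V V ℝ)
    (φ : Fin n → V → ℝ) (μ : Fin n → ℝ)
    (horth : ∀ i j : Fin n, ∑ v : V, φ i v * φ j v = if i = j then 1 else 0)
    (heig : ∀ i : Fin n, M.mulVec (φ i) = μ i • φ i)
    (hφ0 : ∀ v : V, φ ⟨0, hn1⟩ v = (Real.sqrt n)⁻¹)
    (hμ0 : μ ⟨0, hn1⟩ = 1)
    (lam : ℝ) (hlam1 : lam ≤ 1)
    (W : Finset V)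
    (a : V → ℝ)
    (hint : ∀ i : Fin n, lam ≤ |μ i| →
      ∑ w ∈ W, a w * φ i w = (1 / (n : ℝ)) * ∑ v : V, φ i v)
    (f : V → ℝ)
    (hf : ∀ v : V, f v = (∑ w ∈ W, a w * (if v = w then 1 else 0)) - 1 / (n : ℝ)) :
    ∀ k : ℕ, ∑ v : V, ((M ^ k).mulVec f v) ^ 2 ≤ lam ^ (2 * k) * ∑ w ∈ W, (a w) ^ 2 := by
  intro k
  have hf' : ∀ v, f v = (if v ∈ W then a v else 0) - 1 / n := by simp [hf, mul_ite]
  have hcoef : ∀ i, lam ≤ |μ i| → ∑ v, φ i v * f v = 0 := fun i hi ↦ by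
    simp only [hf', mul_sub, sum_sub_distrib, mul_ite, mul_zero, sum_ite_mem, univ_inter, ← sum_mul,
      sub_eq_zero]
    simpa [mul_comm] using hint i hi
  have hmean : ∑ v, f v = 0 := by
    simpa [hφ0, ← mul_sum, hμ0, hlam1, hn1.ne'] using hcoef ⟨0, hn1⟩
  have hnorm : ∑ v, f v ^ 2 ≤ ∑ w ∈ W, a w ^ 2 := by
    simpa [hf', ite_pow, sum_ite_mem] using sum_sq_le_sum_sq_add_const hmean (1 / n)
  calc ∑ v, (M ^ k *ᵥ f) v ^ 2 ≤ (lam ^ k) ^ 2 * ∑ v, f v ^ 2 := by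
        refine Matrix.sum_sq_mulVec_le_of_orthonormal_eigenvectors (by simp [hn]) horth
          (fun i ↦ Matrix.pow_mulVec_of_mulVec_eq_smul (heig i) k) fun i hi ↦ ?_
        rw [abs_pow]
        exact pow_le_pow_left₀ (abs_nonneg _) (not_le.mp (mt (hcoef i) hi)).le k
    _ ≤ lam ^ (2 * k) * ∑ w ∈ W, a w ^ 2 := by
        rw [pow_mul']
        gcongr

/-- In the setting of Statement 0, set
`f = Σ_{w∈W} a_w δ_w − (1/n)·𝟙`.  Then for every natural number `k`,
`‖M^k f‖² ≤ λ^{2k} · Σ_{w∈W} a_w²`. -/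
theorem graphical_design_diffusion_upper_bound
    {V : Type*} [Fintype V] [DecidableEq V]
    (G : SimpleGraph V) [DecidableRel G.Adj]
    (hconn : G.Connected)
    (n : ℕ) (hn : Fintype.card V = n) (hn1 : 0 < n)
    (hdeg : ∀ v : V, 0 < G.degree v)
    (M : Matrix V V ℝ)
    (hM : ∀ u v : V, M u v = if G.Adj u v then ((G.degree v : ℝ))⁻¹ else 0)
    (φ : Fin n → V → ℝ) (μ : Fin n → ℝ)
    (horth : ∀ i j : Fin n, ∑ v : V, φ i v * φ j v = if i = j then 1 else 0)
    (heig : ∀ i : Fin n, M.mulVec (φ i) = μ i • φ i)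
    (hφ0 : ∀ v : V, φ ⟨0, hn1⟩ v = (Real.sqrt n)⁻¹)
    (hμ0 : μ ⟨0, hn1⟩ = 1)
    (lam : ℝ) (hlam : 0 < lam) (hlam1 : lam ≤ 1)
    (W : Finset V) (hW : W.Nonempty)
    (a : V → ℝ) (ha : ∀ w ∈ W, 0 ≤ a w)
    (hint : ∀ i : Fin n, lam ≤ |μ i| →
      ∑ w ∈ W, a w * φ i w = (1 / (n : ℝ)) * ∑ v : V, φ i v)
    (f : V → ℝ)
    (hf : ∀ v : V, f v = (∑ w ∈ W, a w * (if v = w then 1 else 0)) - 1 / (n : ℝ)) :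
    ∀ k : ℕ, ∑ v : V, ((M ^ k).mulVec f v) ^ 2 ≤ lam ^ (2 * k) * ∑ w ∈ W, (a w) ^ 2 :=
  graphical_design_diffusion_upper_bound_general n hn hn1 M φ μ horth heig hφ0 hμ0 lam hlam1 W a
    hint f hf
end

section
/- Let 0 < λ ≤ 1 and suppose W ⊆ V is a nonempty subset equipped with nonnegative weights (a_w)_{w∈W} such that W integrates φ_i exactly for every index i with |μ_i| ≥ λ. Set g = Σ_{w∈W} a_w δ_w and f = g − (1/n)·𝟙, where δ_w is the indicator vector of w and 𝟙 is the all-ones vector. Then for every natural number k, M^k f = Σ_{i : |μ_i| < λ} μ_i^k · ⟨g, φ_i⟩ · φ_i. -/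
/-!
An orthonormal family of `n = |V|` vectors in `ℝ^V` is an orthonormal basis, so every vector
expands as `x = Σ_i ⟨x, φ_i⟩ φ_i` and `M^k` acts on the expansion by `φ_i ↦ μ_i^k φ_i`.
For `f = g - (1/n)𝟙` the coefficient `⟨f, φ_i⟩ = ⟨g, φ_i⟩ - (1/n)Σ_v φ_i(v)` vanishes whenever
`|μ_i| ≥ λ` because `W` integrates `φ_i` exactly, while for `|μ_i| < λ ≤ 1` the index `i` is not
the constant eigenvector, so `φ_i ⟂ 𝟙` and the coefficient is `⟨g, φ_i⟩`.
-/

open Finset Matrix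

section OrthonormalEigenbasis

variable {ι V : Type*} [Fintype ι] [Fintype V] [DecidableEq ι]

theorem sum_dotProduct_smul_eq_self_of_orthonormal (φ : ι → V → ℝ)
    (hcard : Fintype.card ι = Fintype.card V)
    (horth : ∀ i j, φ i ⬝ᵥ φ j = if i = j then 1 else 0) (x : V → ℝ) :
    ∑ i, (x ⬝ᵥ φ i) • φ i = x := by
  classical
  set P : Matrix ι V ℝ := Matrix.of φ
  have hPPt : P * Pᵀ = 1 := by
    ext i j
    simpa [Matrix.mul_apply, Matrix.one_apply, P, dotProduct] using horth i j
  have hPtP : Pᵀ * P = 1 := (mul_eq_one_comm_of_card_eq _ _ _ hcard).mp hPPt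
  calc ∑ i, (x ⬝ᵥ φ i) • φ i = Pᵀ *ᵥ (P *ᵥ x) := by
        rw [mulVec_transpose, vecMul_eq_sum]
        exact sum_congr rfl fun i _ => by rw [dotProduct_comm]; rfl
    _ = x := by rw [mulVec_mulVec, hPtP, one_mulVec]

theorem mulVec_pow_of_mulVec_eq_smul [DecidableEq V] {M : Matrix V V ℝ} {x : V → ℝ} {c : ℝ}
    (hx : M *ᵥ x = c • x) (k : ℕ) : (M ^ k) *ᵥ x = c ^ k • x := by
  induction k with
  | zero => simp
  | succ k ih => rw [pow_succ', ← mulVec_mulVec, ih, mulVec_smul, hx, smul_smul, pow_succ]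

theorem pow_mulVec_eq_sum_of_orthonormal_eigenbasis [DecidableEq V] (M : Matrix V V ℝ)
    (φ : ι → V → ℝ) (μ : ι → ℝ) (hcard : Fintype.card ι = Fintype.card V)
    (horth : ∀ i j, φ i ⬝ᵥ φ j = if i = j then 1 else 0)
    (heig : ∀ i, M *ᵥ φ i = μ i • φ i) (x : V → ℝ) (k : ℕ) :
    (M ^ k) *ᵥ x = ∑ i, (μ i ^ k * (x ⬝ᵥ φ i)) • φ i := by
  conv_lhs => rw [← sum_dotProduct_smul_eq_self_of_orthonormal φ hcard horth x]
  simp only [mulVec_sum, mulVec_smul, mulVec_pow_of_mulVec_eq_smul (heig _), smul_smul,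
    mul_comm]

end OrthonormalEigenbasis

theorem graphical_design_diffusion_expansion_general
    {V : Type*} [Fintype V] [DecidableEq V]
    (n : ℕ) (hn : Fintype.card V = n) (hn1 : 0 < n)
    (M : Matrix V V ℝ)
    (φ : Fin n → V → ℝ) (μ : Fin n → ℝ)
    (horth : ∀ i j : Fin n, ∑ v : V, φ i v * φ j v = if i = j then 1 else 0)
    (heig : ∀ i : Fin n, M.mulVec (φ i) = μ i • φ i)
    (hφ0 : ∀ v : V, φ ⟨0, hn1⟩ v = (Real.sqrt n)⁻¹)
    (hμ0 : μ ⟨0, hn1⟩ = 1)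
    (lam : ℝ) (hlam1 : lam ≤ 1)
    (W : Finset V)
    (a : V → ℝ)
    (hint : ∀ i : Fin n, lam ≤ |μ i| →
      ∑ w ∈ W, a w * φ i w = (1 / (n : ℝ)) * ∑ v : V, φ i v)
    (g f : V → ℝ)
    (hg : ∀ v : V, g v = ∑ w ∈ W, a w * (if v = w then 1 else 0))
    (hf : ∀ v : V, f v = g v - 1 / (n : ℝ)) :
    ∀ (k : ℕ) (v : V),
      (M ^ k).mulVec f v =
        ∑ i ∈ univ.filter (fun i : Fin n => |μ i| < lam),
          μ i ^ k * (∑ u : V, g u * φ i u) * φ i v := by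
  intro k v
  have hcard : Fintype.card (Fin n) = Fintype.card V := by simp [hn]
  have hgφ : ∀ i, g ⬝ᵥ φ i = ∑ w ∈ W, a w * φ i w := fun i => by
    simp only [dotProduct, hg, sum_mul, ite_mul, zero_mul, mul_ite, mul_zero]
    rw [sum_comm]
    simp
  have hfφ : ∀ i, f ⬝ᵥ φ i = g ⬝ᵥ φ i - 1 / (n : ℝ) * ∑ v, φ i v := fun i => by
    simp only [dotProduct, hf, sub_mul, sum_sub_distrib, mul_sum]
  have hsum_zero : ∀ i, i ≠ ⟨0, hn1⟩ → ∑ v, φ i v = 0 := fun i hi => by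
    have hsqrt : (Real.sqrt n)⁻¹ ≠ 0 := by positivity
    have h := horth i ⟨0, hn1⟩
    simp only [hφ0, ← sum_mul, if_neg hi] at h
    exact (mul_eq_zero.mp h).resolve_right hsqrt
  have hcoef : ∀ i, f ⬝ᵥ φ i = if |μ i| < lam then g ⬝ᵥ φ i else 0 := fun i => by
    split_ifs with hi
    · have hne : i ≠ ⟨0, hn1⟩ := by rintro rfl; simp [hμ0] at hi; linarith
      rw [hfφ, hsum_zero i hne, mul_zero, sub_zero]
    · rw [hfφ, hgφ, hint i (not_lt.mp hi), sub_self]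
  rw [pow_mulVec_eq_sum_of_orthonormal_eigenbasis M φ μ hcard horth heig f k, Finset.sum_apply,
    sum_filter]
  refine sum_congr rfl fun i _ => ?_
  rw [hcoef i]
  split_ifs <;> simp [dotProduct]

/-- In the setting of Statement 0, set `g = Σ_{w∈W} a_w δ_w` and
`f = g − (1/n)·𝟙`.  Then for every natural number `k`,
`M^k f = Σ_{i : |μ_i| < λ} μ_i^k · ⟨g, φ_i⟩ · φ_i`. -/
theorem graphical_design_diffusion_expansion
    {V : Type*} [Fintype V] [DecidableEq V]
    (G : SimpleGraph V) [DecidableRel G.Adj]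
    (hconn : G.Connected)
    (n : ℕ) (hn : Fintype.card V = n) (hn1 : 0 < n)
    (hdeg : ∀ v : V, 0 < G.degree v)
    (M : Matrix V V ℝ)
    (hM : ∀ u v : V, M u v = if G.Adj u v then ((G.degree v : ℝ))⁻¹ else 0)
    (φ : Fin n → V → ℝ) (μ : Fin n → ℝ)
    (horth : ∀ i j : Fin n, ∑ v : V, φ i v * φ j v = if i = j then 1 else 0)
    (heig : ∀ i : Fin n, M.mulVec (φ i) = μ i • φ i)
    (hφ0 : ∀ v : V, φ ⟨0, hn1⟩ v = (Real.sqrt n)⁻¹)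
    (hμ0 : μ ⟨0, hn1⟩ = 1)
    (lam : ℝ) (hlam : 0 < lam) (hlam1 : lam ≤ 1)
    (W : Finset V) (hW : W.Nonempty)
    (a : V → ℝ) (ha : ∀ w ∈ W, 0 ≤ a w)
    (hint : ∀ i : Fin n, lam ≤ |μ i| →
      ∑ w ∈ W, a w * φ i w = (1 / (n : ℝ)) * ∑ v : V, φ i v)
    (g f : V → ℝ)
    (hg : ∀ v : V, g v = ∑ w ∈ W, a w * (if v = w then 1 else 0))
    (hf : ∀ v : V, f v = g v - 1 / (n : ℝ)) :
    ∀ (k : ℕ) (v : V),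
      (M ^ k).mulVec f v =
        ∑ i ∈ univ.filter (fun i : Fin n => |μ i| < lam),
          μ i ^ k * (∑ u : V, g u * φ i u) * φ i v :=
  graphical_design_diffusion_expansion_general n hn hn1 M φ μ horth heig hφ0 hμ0 lam hlam1 W a hint
    g f hg hf
end

section
/- Suppose G is d-regular with d ≥ 1, let 0 < λ ≤ 1, and suppose the nonempty subset W ⊆ V, equipped with the equal weights a_w = 1/|W|, integrates φ_i exactly for every index i with |μ_i| ≥ λ. If 2·|W|·(d+1) < n, then λ² ≥ 1/(2(d+1)). In particular, an equal-weight subset occupying less than a 1/(2(d+1)) fraction of the vertices can never integrate exactly all eigenvectors whose eigenvalue satisfies |μ_i| ≥ λ for any λ < (2(d+1))^{-1/2}. -/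
/-!
Let `x` be the indicator of `W` and `y = x - (|W|/n)·1` its centering. With equal weights, exact
integration of `φ_i` says precisely that `⟨y, φ_i⟩ = 0`, and `⟨y, φ_1⟩ = 0` holds anyway. So `y`
lies in the span of the eigenvectors with `|μ_i| < λ`, and Parseval gives
`‖My‖² ≤ λ²‖y‖² = λ² (|W| - |W|²/n)`. On the other hand `Mx` has total mass `|W|` carried by
the at most `d|W|` neighbours of `W`, so by Cauchy–Schwarz `‖Mx‖² ≥ |W|/d`, and since `M` fixes
constants, `‖My‖² = ‖Mx‖² - |W|²/n`. Comparing, `λ² ≥ 1/d - |W|/n > 1/(d+1) - 1/(2(d+1))`.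
-/

open Finset Matrix

namespace Matrix

variable {ι V : Type*} [Fintype ι] [Fintype V]

theorem sum_sq_dotProduct_eq_of_orthonormal [DecidableEq ι]
    (hcard : Fintype.card ι = Fintype.card V) {φ : ι → V → ℝ}
    (horth : ∀ i j, φ i ⬝ᵥ φ j = if i = j then 1 else 0) (u : V → ℝ) :
    ∑ i, (u ⬝ᵥ φ i) ^ 2 = u ⬝ᵥ u := by
  classical
  set P : Matrix ι V ℝ := Matrix.of φ
  have hPPt : P * Pᵀ = 1 := by
    ext i j
    simpa [mul_apply, one_apply, dotProduct, P] using horth i j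
  have hPtP : Pᵀ * P = 1 := (mul_eq_one_comm_of_card_eq ι V ℝ hcard).mp hPPt
  calc ∑ i, (u ⬝ᵥ φ i) ^ 2 = P *ᵥ u ⬝ᵥ P *ᵥ u := by
        simp only [sq, dotProduct, mulVec, P, of_apply, mul_comm (u _)]
    _ = u ⬝ᵥ u := by
        rw [dotProduct_mulVec, ← mulVec_transpose, mulVec_mulVec, hPtP, one_mulVec,
          dotProduct_comm]

theorem dotProduct_mulVec_self_le_of_dotProduct_eq_zero [DecidableEq ι]
    (hcard : Fintype.card ι = Fintype.card V) {φ : ι → V → ℝ}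
    (horth : ∀ i j, φ i ⬝ᵥ φ j = if i = j then 1 else 0)
    {M : Matrix V V ℝ} (hM : M.IsSymm) {μ : ι → ℝ} (heig : ∀ i, M *ᵥ φ i = μ i • φ i)
    {lam : ℝ} {y : V → ℝ} (hy : ∀ i, lam ≤ |μ i| → y ⬝ᵥ φ i = 0) :
    M *ᵥ y ⬝ᵥ M *ᵥ y ≤ lam ^ 2 * (y ⬝ᵥ y) := by
  have hcoeff : ∀ i, M *ᵥ y ⬝ᵥ φ i = μ i * (y ⬝ᵥ φ i) := fun i => by
    rw [dotProduct_comm, dotProduct_mulVec, ← mulVec_transpose, hM.eq, heig, smul_dotProduct,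
      smul_eq_mul, dotProduct_comm]
  rw [← sum_sq_dotProduct_eq_of_orthonormal hcard horth,
    ← sum_sq_dotProduct_eq_of_orthonormal hcard horth, Finset.mul_sum]
  refine Finset.sum_le_sum fun i _ => ?_
  rw [hcoeff, mul_pow]
  rcases le_or_gt lam |μ i| with hlarge | hsmall
  · simp [hy i hlarge]
  · refine mul_le_mul_of_nonneg_right ?_ (sq_nonneg _)
    rw [← sq_abs]
    exact pow_le_pow_left₀ (abs_nonneg _) hsmall.le 2

end Matrix

section

variable {V : Type*} [Fintype V]

noncomputable def meanCentered (f : V → ℝ) : V → ℝ :=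
  f - ((∑ v, f v) / Fintype.card V) • 1

theorem sum_meanCentered (f : V → ℝ) : ∑ v, meanCentered f v = 0 := by
  rcases isEmpty_or_nonempty V with hV | hV
  · simp
  · have hcard : (Fintype.card V : ℝ) ≠ 0 := Nat.cast_ne_zero.mpr Fintype.card_ne_zero
    simp [meanCentered, Finset.sum_sub_distrib, mul_div_cancel₀ _ hcard]

theorem meanCentered_dotProduct (f g : V → ℝ) :
    meanCentered f ⬝ᵥ g = f ⬝ᵥ g - (∑ v, f v) / Fintype.card V * ∑ v, g v := by
  rw [meanCentered, sub_dotProduct, smul_dotProduct, one_dotProduct, smul_eq_mul]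

theorem meanCentered_dotProduct_self (f : V → ℝ) :
    meanCentered f ⬝ᵥ meanCentered f = f ⬝ᵥ f - (∑ v, f v) ^ 2 / Fintype.card V := by
  rw [meanCentered_dotProduct, sum_meanCentered, mul_zero, sub_zero, dotProduct_comm,
    meanCentered_dotProduct, ← dotProduct_one, sq]
  ring

theorem meanCentered_dotProduct_const (f : V → ℝ) (c : ℝ) :
    meanCentered f ⬝ᵥ (fun _ => c) = 0 := by
  simp [dotProduct, ← Finset.sum_mul, sum_meanCentered]

theorem indicator_one_dotProduct (W : Finset V) (f : V → ℝ) :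
    (W : Set V).indicator 1 ⬝ᵥ f = ∑ w ∈ W, f w := by
  classical
  simp [dotProduct, Set.indicator_apply, ite_mul, Finset.sum_ite_mem]

theorem sum_indicator_one_eq_card (W : Finset V) :
    ∑ v, (W : Set V).indicator (1 : V → ℝ) v = #W := by
  simpa [dotProduct_one] using indicator_one_dotProduct W 1

theorem indicator_one_dotProduct_self (W : Finset V) :
    (W : Set V).indicator 1 ⬝ᵥ (W : Set V).indicator (1 : V → ℝ) = #W := by
  rw [indicator_one_dotProduct, Finset.sum_indicator_subset _ subset_rfl]
  simp

theorem meanCentered_indicator_dotProduct_eq_zero {W : Finset V} (hW : W.Nonempty) {f : V → ℝ}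
    (hf : ∑ w ∈ W, (#W : ℝ)⁻¹ * f w = 1 / Fintype.card V * ∑ v, f v) :
    meanCentered ((W : Set V).indicator 1) ⬝ᵥ f = 0 := by
  have hK : (#W : ℝ) ≠ 0 := by exact_mod_cast hW.card_pos.ne'
  rw [← Finset.mul_sum] at hf
  rw [meanCentered_dotProduct, indicator_one_dotProduct, sum_indicator_one_eq_card,
    div_eq_mul_one_div, mul_assoc, ← hf, mul_inv_cancel_left₀ hK, sub_self]

theorem sum_mulVec_of_one_vecMul {M : Matrix V V ℝ} (hcol : 1 ᵥ* M = 1) (f : V → ℝ) :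
    ∑ v, (M *ᵥ f) v = ∑ v, f v := by
  rw [← one_dotProduct, dotProduct_mulVec, hcol, one_dotProduct]

theorem mulVec_meanCentered {M : Matrix V V ℝ} (hrow : M *ᵥ 1 = 1) (hcol : 1 ᵥ* M = 1)
    (f : V → ℝ) : M *ᵥ meanCentered f = meanCentered (M *ᵥ f) := by
  rw [meanCentered, meanCentered, mulVec_sub, mulVec_smul, hrow, sum_mulVec_of_one_vecMul hcol]

theorem sq_sum_le_card_mul_dotProduct_self {g : V → ℝ} {T : Finset V}
    (hg : Function.support g ⊆ T) : (∑ v, g v) ^ 2 ≤ #T * (g ⬝ᵥ g) := by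
  have hout : ∀ v ∉ T, g v = 0 := fun v hv => Function.notMem_support.mp fun h => hv (hg h)
  rw [dotProduct, ← sum_subset (subset_univ T) fun v _ hv => hout v hv,
    ← sum_subset (subset_univ T) fun v _ hv => by simp [hout v hv]]
  simpa only [sq] using sq_sum_le_card_mul_sum_sq

end

namespace SimpleGraph

variable {V : Type*} {G : SimpleGraph V} [DecidableRel G.Adj] {d : ℕ}

variable (G d) in
noncomputable def randomWalkMatrix : Matrix V V ℝ :=
  (d : ℝ)⁻¹ • G.adjMatrix ℝ

variable (G d) in
theorem isSymm_randomWalkMatrix : (G.randomWalkMatrix d).IsSymm :=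
  G.isSymm_adjMatrix.smul _

variable [Fintype V]

theorem one_vecMul_adjMatrix_of_regular (hreg : G.IsRegularOfDegree d) :
    1 ᵥ* G.adjMatrix ℝ = (d : ℝ) • 1 := by
  ext v
  simp [hreg v]

theorem card_mul_le_dotProduct_self_adjMatrix_mulVec_indicator [DecidableEq V]
    (hreg : G.IsRegularOfDegree d) (W : Finset V) :
    (#W * d : ℝ) ≤ G.adjMatrix ℝ *ᵥ (W : Set V).indicator 1 ⬝ᵥ
      G.adjMatrix ℝ *ᵥ (W : Set V).indicator 1 := by
  set g := G.adjMatrix ℝ *ᵥ (W : Set V).indicator 1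
  set T := W.biUnion fun w => G.neighborFinset w
  have hsum : ∑ v, g v = #W * d := by
    rw [← one_dotProduct, dotProduct_mulVec, one_vecMul_adjMatrix_of_regular hreg,
      smul_dotProduct, one_dotProduct, Finset.sum_indicator_subset _ (subset_univ W)]
    simp [mul_comm]
  have hsupp : Function.support g ⊆ T := by
    intro v hv
    obtain ⟨u, hu, hgu⟩ := exists_ne_zero_of_sum_ne_zero (by simpa [g] using hv)
    have huW : u ∈ W := by by_contra h; simp [h] at hgu
    exact mem_biUnion.mpr ⟨u, huW, by simpa [adj_comm] using hu⟩
  have hcard : (#T : ℝ) ≤ #W * d := by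
    have hdeg : ∑ w ∈ W, #(G.neighborFinset w) = #W * d := by
      simp [card_neighborFinset_eq_degree, hreg.degree_eq]
    exact_mod_cast card_biUnion_le.trans_eq hdeg
  have hCS := (sq_sum_le_card_mul_dotProduct_self hsupp).trans
    (mul_le_mul_of_nonneg_right hcard (by simpa using dotProduct_self_star_nonneg g))
  rw [hsum, sq] at hCS
  rcases (by positivity : (0 : ℝ) ≤ #W * d).eq_or_lt with h0 | hpos
  · rw [← h0]; simpa using dotProduct_self_star_nonneg g
  · exact le_of_mul_le_mul_left hCS hpos

theorem one_vecMul_randomWalkMatrix (hreg : G.IsRegularOfDegree d) (hd : d ≠ 0) :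
    1 ᵥ* G.randomWalkMatrix d = 1 := by
  rw [randomWalkMatrix, vecMul_smul, one_vecMul_adjMatrix_of_regular hreg, smul_smul,
    inv_mul_cancel₀ (Nat.cast_ne_zero.mpr hd), one_smul]

theorem randomWalkMatrix_mulVec_one (hreg : G.IsRegularOfDegree d) (hd : d ≠ 0) :
    G.randomWalkMatrix d *ᵥ 1 = 1 := by
  rw [← (G.isSymm_randomWalkMatrix d).eq, mulVec_transpose, one_vecMul_randomWalkMatrix hreg hd]

theorem card_div_le_dotProduct_self_randomWalkMatrix_mulVec_indicator [DecidableEq V]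
    (hreg : G.IsRegularOfDegree d) (hd : d ≠ 0) (W : Finset V) :
    (#W / d : ℝ) ≤ G.randomWalkMatrix d *ᵥ (W : Set V).indicator 1 ⬝ᵥ
      G.randomWalkMatrix d *ᵥ (W : Set V).indicator 1 := by
  have hd' : (d : ℝ) ≠ 0 := Nat.cast_ne_zero.mpr hd
  calc (#W / d : ℝ) = (d : ℝ)⁻¹ ^ 2 * (#W * d) := by field_simp
    _ ≤ (d : ℝ)⁻¹ ^ 2 * (G.adjMatrix ℝ *ᵥ (W : Set V).indicator 1 ⬝ᵥ
          G.adjMatrix ℝ *ᵥ (W : Set V).indicator 1) := by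
      gcongr
      exact card_mul_le_dotProduct_self_adjMatrix_mulVec_indicator hreg W
    _ = _ := by
      rw [randomWalkMatrix, smul_mulVec, smul_dotProduct, dotProduct_smul, smul_eq_mul,
        smul_eq_mul]
      ring

end SimpleGraph

theorem one_div_two_mul_add_one_le {K n d l : ℝ} (hK : 0 < K) (hd : 1 ≤ d) (hl : 0 ≤ l)
    (hsize : 2 * K * (d + 1) < n) (h : K / d - K ^ 2 / n ≤ l * (K - K ^ 2 / n)) :
    1 / (2 * (d + 1)) ≤ l := by
  have hn : 0 < n := by nlinarith
  have hd0 : 0 < d := by linarith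
  have hdiv : 1 / d - K / n ≤ l * (1 - K / n) := by
    have hscaled : K * (1 / d - K / n) ≤ K * (l * (1 - K / n)) := by
      convert h using 1 <;> ring
    exact le_of_mul_le_mul_left hscaled hK
  have hKn : K / n < 1 / (2 * (d + 1)) := by
    rw [div_lt_div_iff₀ hn (by positivity)]; linarith
  have hd1 : 1 / (d + 1) ≤ 1 / d := one_div_le_one_div_of_le hd0 (by linarith)
  have hhalf : 1 / (d + 1) - 1 / (2 * (d + 1)) = 1 / (2 * (d + 1)) := by
    field_simp; ring
  nlinarith [div_pos hK hn]

theorem regular_graph_design_eigenvalue_obstruction_general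
    {V : Type*} [Fintype V]
    (G : SimpleGraph V) [DecidableRel G.Adj]
    (n d : ℕ) (hn : Fintype.card V = n) (hn1 : 0 < n) (hd : 1 ≤ d)
    (hreg : G.IsRegularOfDegree d)
    (M : Matrix V V ℝ)
    (hM : M = ((d : ℝ))⁻¹ • G.adjMatrix ℝ)
    (φ : Fin n → V → ℝ) (μ : Fin n → ℝ)
    (horth : ∀ i j : Fin n, ∑ v : V, φ i v * φ j v = if i = j then 1 else 0)
    (heig : ∀ i : Fin n, M.mulVec (φ i) = μ i • φ i)
    (hφ0 : ∀ v : V, φ ⟨0, hn1⟩ v = (Real.sqrt n)⁻¹)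
    (lam : ℝ)
    (W : Finset V) (hW : W.Nonempty)
    (hint : ∀ i : Fin n, lam ≤ |μ i| →
      ∑ w ∈ W, ((W.card : ℝ))⁻¹ * φ i w = (1 / (n : ℝ)) * ∑ v : V, φ i v)
    (hsize : 2 * W.card * (d + 1) < n) :
    lam ^ 2 ≥ 1 / (2 * ((d : ℝ) + 1)) := by
  classical
  change M = G.randomWalkMatrix d at hM
  subst hM
  have hd0 : d ≠ 0 := by omega
  set x : V → ℝ := (W : Set V).indicator 1
  have hy : ∀ i, lam ≤ |μ i| → meanCentered x ⬝ᵥ φ i = 0 := fun i hi => by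
    by_cases h0 : i = ⟨0, hn1⟩
    · rw [h0, show φ ⟨0, hn1⟩ = fun _ => (Real.sqrt n)⁻¹ from funext hφ0,
        meanCentered_dotProduct_const]
    · exact meanCentered_indicator_dotProduct_eq_zero hW (hn ▸ hint i hi)
  have hrow := SimpleGraph.randomWalkMatrix_mulVec_one hreg hd0
  have hcol := SimpleGraph.one_vecMul_randomWalkMatrix hreg hd0
  have hspec := dotProduct_mulVec_self_le_of_dotProduct_eq_zero (by simp [hn]) horth
    (G.isSymm_randomWalkMatrix d) heig hy
  rw [mulVec_meanCentered hrow hcol, meanCentered_dotProduct_self, meanCentered_dotProduct_self,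
    sum_mulVec_of_one_vecMul hcol, sum_indicator_one_eq_card, indicator_one_dotProduct_self,
    hn] at hspec
  have hMx := SimpleGraph.card_div_le_dotProduct_self_randomWalkMatrix_mulVec_indicator hreg hd0 W
  exact one_div_two_mul_add_one_le (by exact_mod_cast hW.card_pos) (by exact_mod_cast hd)
    (sq_nonneg lam) (by exact_mod_cast hsize : (2 * #W * (d + 1) : ℝ) < n) (by linarith)

/-- Let `G` be a connected `d`-regular graph (`d ≥ 1`) on `n` vertices
with random-walk matrix `M = (1/d)·A`, and let `0 < λ ≤ 1`.  If the nonempty set `W`,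
equipped with the equal weights `a_w = 1/|W|`, integrates `φ_i` exactly for every `i` with
`|μ_i| ≥ λ`, and `2·|W|·(d+1) < n`, then `λ² ≥ 1/(2(d+1))`. -/
theorem regular_graph_design_eigenvalue_obstruction
    {V : Type*} [Fintype V] [DecidableEq V]
    (G : SimpleGraph V) [DecidableRel G.Adj]
    (hconn : G.Connected)
    (n d : ℕ) (hn : Fintype.card V = n) (hn1 : 0 < n) (hd : 1 ≤ d)
    (hreg : G.IsRegularOfDegree d)
    (M : Matrix V V ℝ)
    (hM : M = ((d : ℝ))⁻¹ • G.adjMatrix ℝ)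
    (φ : Fin n → V → ℝ) (μ : Fin n → ℝ)
    (horth : ∀ i j : Fin n, ∑ v : V, φ i v * φ j v = if i = j then 1 else 0)
    (heig : ∀ i : Fin n, M.mulVec (φ i) = μ i • φ i)
    (hφ0 : ∀ v : V, φ ⟨0, hn1⟩ v = (Real.sqrt n)⁻¹)
    (hμ0 : μ ⟨0, hn1⟩ = 1)
    (lam : ℝ) (hlam : 0 < lam) (hlam1 : lam ≤ 1)
    (W : Finset V) (hW : W.Nonempty)
    (hint : ∀ i : Fin n, lam ≤ |μ i| →
      ∑ w ∈ W, ((W.card : ℝ))⁻¹ * φ i w = (1 / (n : ℝ)) * ∑ v : V, φ i v)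
    (hsize : 2 * W.card * (d + 1) < n) :
    lam ^ 2 ≥ 1 / (2 * ((d : ℝ) + 1)) :=
  regular_graph_design_eigenvalue_obstruction_general G n d hn hn1 hd hreg M hM φ μ horth heig hφ0
    lam W hW hint hsize
end
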